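/- arXiv:2505.17382 — 7 statements merged into one kernel-verified Lean document; each statement's English description precedes it below -/
import Mathlib

section
/- Let τ, λ > 0 and l, u > 0 with 2τλ < min(l², u²). For z ∈ ℝ, consider h(y) = (1/2)(y - z)² + τλ·‖y‖₀ + δ_{[-l,u]}(y), where ‖y‖₀ = 0 if y = 0 and 1 otherwise. If -l < z < u and |z| > √(2τλ), then z is the unique global minimizer of h. -/
/-- if -l < z < u and |z| > √(2τλ), then z is the unique global
minimizer of h(y) = (1/2)(y-z)² + τλ‖y‖₀ + δ_{[-l,u]}(y). -/
theorem stmt0 (τ lam l u z : ℝ) (hτ : 0 < τ) (hlam : 0 < lam)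
    (hl : 0 < l) (hu : 0 < u) (hbound : 2 * τ * lam < min (l ^ 2) (u ^ 2))
    (h : ℝ → EReal)
    (hdef : ∀ y, h y = if y ∈ Set.Icc (-l) u then
        (if y = 0 then ((z ^ 2 / 2 : ℝ) : EReal)
         else (((1 / 2) * (y - z) ^ 2 + τ * lam : ℝ) : EReal))
      else ⊤)
    (hz1 : -l < z) (hz2 : z < u) (hz3 : Real.sqrt (2 * τ * lam) < |z|) :
    ∀ y, y ≠ z → h z < h y := by
  have htl : 0 < 2 * τ * lam := by positivity
  have hz0 : z ≠ 0 := by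
    intro hz; rw [hz, abs_zero] at hz3
    exact absurd hz3 (not_lt.mpr (Real.sqrt_nonneg _))
  have hzsq : 2 * τ * lam < z ^ 2 := by
    have := Real.sq_sqrt htl.le
    calc 2 * τ * lam = Real.sqrt (2 * τ * lam) ^ 2 := this.symm
      _ < |z| ^ 2 := by
          apply pow_lt_pow_left₀ hz3 (Real.sqrt_nonneg _)
          norm_num
      _ = z ^ 2 := sq_abs z
  have hzmem : z ∈ Set.Icc (-l) u := ⟨hz1.le, hz2.le⟩
  have hz : h z = ((τ * lam : ℝ) : EReal) := by
    rw [hdef z, if_pos hzmem, if_neg hz0]; norm_num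
  intro y hy
  rw [hz, hdef y]
  by_cases hmem : y ∈ Set.Icc (-l) u
  · rw [if_pos hmem]
    by_cases hy0 : y = 0
    · rw [if_pos hy0]
      rw [EReal.coe_lt_coe_iff]
      linarith
    · rw [if_neg hy0, EReal.coe_lt_coe_iff]
      have : 0 < (y - z) ^ 2 := by
        have : y - z ≠ 0 := sub_ne_zero.mpr hy
        positivity
      linarith
  · rw [if_neg hmem]
    exact lt_of_lt_of_le (EReal.coe_lt_top _) le_rfl
end

section
/- Let τ, λ > 0 and l, u > 0 with 2τλ < min(l², u²). For z ∈ ℝ with z ≥ u, the point u is the unique global minimizer of h(y) = (1/2)(y - z)² + τλ·‖y‖₀ + δ_{[-l,u]}(y); in particular h(u) < h(0). -/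
/-- if z ≥ u, then u is the unique global minimizer of
h(y) = (1/2)(y-z)² + τλ‖y‖₀ + δ_{[-l,u]}(y); in particular h(u) < h(0). -/
theorem stmt1 (τ lam l u z : ℝ) (hτ : 0 < τ) (hlam : 0 < lam)
    (hl : 0 < l) (hu : 0 < u) (hbound : 2 * τ * lam < min (l ^ 2) (u ^ 2))
    (h : ℝ → EReal)
    (hdef : ∀ y, h y = if y ∈ Set.Icc (-l) u then
        (if y = 0 then ((z ^ 2 / 2 : ℝ) : EReal)
         else (((1 / 2) * (y - z) ^ 2 + τ * lam : ℝ) : EReal))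
      else ⊤)
    (hz : u ≤ z) :
    (∀ y, y ≠ u → h u < h y) ∧ h u < h 0 := by
  have hu2 : 2 * τ * lam < u ^ 2 := lt_of_lt_of_le hbound (min_le_right _ _)
  have humem : u ∈ Set.Icc (-l) u := ⟨by linarith, le_refl u⟩
  have hune : u ≠ 0 := ne_of_gt hu
  have hhu : h u = (((1 / 2) * (u - z) ^ 2 + τ * lam : ℝ) : EReal) := by
    rw [hdef]; simp [humem, hune]
  have h0mem : (0 : ℝ) ∈ Set.Icc (-l) u := ⟨by linarith, le_of_lt hu⟩
  have hh0 : h 0 = ((z ^ 2 / 2 : ℝ) : EReal) := by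
    rw [hdef]; simp [h0mem]
  have key0 : h u < h 0 := by
    rw [hhu, hh0, EReal.coe_lt_coe_iff]
    nlinarith
  refine ⟨fun y hy => ?_, key0⟩
  rw [hhu]
  by_cases hmem : y ∈ Set.Icc (-l) u
  · by_cases hy0 : y = 0
    · rw [hy0]; rw [hhu] at key0; exact key0
    · rw [hdef]
      simp only [hmem, if_true, hy0, if_false]
      rw [EReal.coe_lt_coe_iff]
      have hyu : y < u := lt_of_le_of_ne hmem.2 hy
      nlinarith
  · rw [hdef]
    simp only [hmem, if_false]
    exact lt_top_iff_ne_top.mpr (EReal.coe_ne_top _)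
end

section
/- Let τ, λ > 0 and l, u > 0 with 2τλ < min(l², u²). For z ∈ ℝ with |z| < √(2τλ), the point 0 is the unique global minimizer of h(y) = (1/2)(y - z)² + τλ·‖y‖₀ + δ_{[-l,u]}(y). -/
/-- if |z| < √(2τλ), then 0 is the unique global minimizer of
h(y) = (1/2)(y-z)² + τλ‖y‖₀ + δ_{[-l,u]}(y). -/
theorem stmt2 (τ lam l u z : ℝ) (hτ : 0 < τ) (hlam : 0 < lam)
    (hl : 0 < l) (hu : 0 < u) (hbound : 2 * τ * lam < min (l ^ 2) (u ^ 2))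
    (h : ℝ → EReal)
    (hdef : ∀ y, h y = if y ∈ Set.Icc (-l) u then
        (if y = 0 then ((z ^ 2 / 2 : ℝ) : EReal)
         else (((1 / 2) * (y - z) ^ 2 + τ * lam : ℝ) : EReal))
      else ⊤)
    (hz : |z| < Real.sqrt (2 * τ * lam)) :
    ∀ y, y ≠ 0 → h 0 < h y := by
  have htl : (0:ℝ) < 2 * τ * lam := by positivity
  have hz2 : z ^ 2 < 2 * τ * lam := by
    have := sq_lt_sq' (neg_lt_of_abs_lt hz) (lt_of_abs_lt hz)
    simpa [Real.sq_sqrt htl.le] using this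
  have h0 : h 0 = ((z ^ 2 / 2 : ℝ) : EReal) := by
    rw [hdef]
    simp [Set.mem_Icc, hl.le, hu.le, neg_nonpos.mpr hl.le]
  intro y hy
  rw [h0, hdef y]
  by_cases hmem : y ∈ Set.Icc (-l) u
  · simp only [hmem, if_true, hy, if_false]
    rw [EReal.coe_lt_coe_iff]
    nlinarith [sq_nonneg (y - z)]
  · simp only [hmem, if_false]
    exact lt_of_lt_of_le (EReal.coe_lt_top _) le_top
end

section
/- Let f: ℝⁿ → ℝ be differentiable and L-strongly smooth, i.e., f(z) ≤ f(x) + ⟨∇f(x), z - x⟩ + (L/2)‖z - x‖² for all x, z. Let p: ℝⁿ → ℝ ∪ {+∞} be any proper function, let λ > 0, and let x* be a global minimizer of φ(x) = f(x) + λp(x). Then for any 0 < τ < 1/L, the set Prox_{τλp}(x* - τ∇f(x*)) := argmin_y { (1/2)‖y - (x* - τ∇f(x*))‖² + τλ p(y) } equals the singleton {x*}. -/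
open RealInnerProductSpace

/-- a global minimizer x* of f + λp (f L-strongly smooth, p proper)
is the unique element of Prox_{τλp}(x* - τ∇f(x*)) for any 0 < τ < 1/L. -/
theorem stmt6 (n : ℕ) (f : EuclideanSpace ℝ (Fin n) → ℝ)
    (g : EuclideanSpace ℝ (Fin n) → EuclideanSpace ℝ (Fin n))
    (hf : ∀ y, HasGradientAt f (g y) y)
    (L : ℝ) (hL : 0 < L)
    (hsmooth : ∀ x z, f z ≤ f x + ⟪g x, z - x⟫ + L / 2 * ‖z - x‖ ^ 2)
    (p : EuclideanSpace ℝ (Fin n) → EReal)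
    (hproper : ∃ x, p x ≠ ⊤) (hbot : ∀ x, p x ≠ ⊥)
    (lam : ℝ) (hlam : 0 < lam)
    (xs : EuclideanSpace ℝ (Fin n)) (hps : p xs ≠ ⊤)
    (hmin : ∀ x, (f xs : EReal) + (lam : EReal) * p xs ≤ (f x : EReal) + (lam : EReal) * p x)
    (τ : ℝ) (hτ1 : 0 < τ) (hτ2 : τ < 1 / L)
    (hne : ∃ y, ∀ w,
      ((1 / 2 * ‖y - (xs - τ • g xs)‖ ^ 2 : ℝ) : EReal) + ((τ * lam : ℝ) : EReal) * p y ≤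
      ((1 / 2 * ‖w - (xs - τ • g xs)‖ ^ 2 : ℝ) : EReal) + ((τ * lam : ℝ) : EReal) * p w) :
    {y | ∀ w,
      ((1 / 2 * ‖y - (xs - τ • g xs)‖ ^ 2 : ℝ) : EReal) + ((τ * lam : ℝ) : EReal) * p y ≤
      ((1 / 2 * ‖w - (xs - τ • g xs)‖ ^ 2 : ℝ) : EReal) + ((τ * lam : ℝ) : EReal) * p w}
      = {xs} := by
  set pxs : ℝ := (p xs).toReal with hpxs
  have hpxseq : p xs = (pxs : EReal) := (EReal.coe_toReal hps (hbot xs)).symm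
  have hτlam : (0:ℝ) < τ * lam := mul_pos hτ1 hlam
  -- key: any minimizer equals xs
  have key : ∀ y, (∀ w,
      ((1 / 2 * ‖y - (xs - τ • g xs)‖ ^ 2 : ℝ) : EReal) + ((τ * lam : ℝ) : EReal) * p y ≤
      ((1 / 2 * ‖w - (xs - τ • g xs)‖ ^ 2 : ℝ) : EReal) + ((τ * lam : ℝ) : EReal) * p w) →
      y = xs := by
    intro y hy
    have h1 := hy xs
    rw [hpxseq] at h1
    have hrhs : ((1 / 2 * ‖xs - (xs - τ • g xs)‖ ^ 2 : ℝ) : EReal) + ((τ * lam : ℝ) : EReal) * (pxs : EReal)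
        = ((1 / 2 * ‖xs - (xs - τ • g xs)‖ ^ 2 + τ * lam * pxs : ℝ) : EReal) := by
      push_cast; ring
    rw [hrhs] at h1
    -- p y is finite
    have hytop : p y ≠ ⊤ := by
      intro h
      rw [h] at h1
      rw [EReal.mul_top_of_pos (by exact_mod_cast hτlam)] at h1
      rw [EReal.add_top_of_ne_bot (EReal.coe_ne_bot _)] at h1
      exact (EReal.coe_ne_top _) (top_le_iff.mp h1)
    set py : ℝ := (p y).toReal with hpy
    have hpyeq : p y = (py : EReal) := (EReal.coe_toReal hytop (hbot y)).symm
    rw [hpyeq] at h1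
    have h1' : 1 / 2 * ‖y - (xs - τ • g xs)‖ ^ 2 + τ * lam * py ≤
        1 / 2 * ‖xs - (xs - τ • g xs)‖ ^ 2 + τ * lam * pxs := by
      have hlhs : ((1 / 2 * ‖y - (xs - τ • g xs)‖ ^ 2 : ℝ) : EReal) + ((τ * lam : ℝ) : EReal) * (py : EReal)
          = ((1 / 2 * ‖y - (xs - τ • g xs)‖ ^ 2 + τ * lam * py : ℝ) : EReal) := by
        push_cast; ring
      rw [hlhs] at h1
      exact EReal.coe_le_coe_iff.mp h1
    have h2e := hmin y
    rw [hpxseq, hpyeq] at h2e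
    have h2 : f xs + lam * pxs ≤ f y + lam * py := by
      have hc : ((f xs + lam * pxs : ℝ) : EReal) ≤ ((f y + lam * py : ℝ) : EReal) := by
        push_cast
        exact h2e
      exact EReal.coe_le_coe_iff.mp hc
    have h3 := hsmooth xs y
    have e1 : ‖y - (xs - τ • g xs)‖ ^ 2
        = ‖y - xs‖ ^ 2 + 2 * (τ * ⟪g xs, y - xs⟫) + τ ^ 2 * ‖g xs‖ ^ 2 := by
      have hv : y - (xs - τ • g xs) = (y - xs) + τ • g xs := by abel
      rw [hv, norm_add_sq_real, real_inner_smul_right, real_inner_comm, norm_smul]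
      simp [mul_pow, abs_of_pos hτ1]
    have e2 : ‖xs - (xs - τ • g xs)‖ ^ 2 = τ ^ 2 * ‖g xs‖ ^ 2 := by
      rw [sub_sub_cancel, norm_smul]
      simp [mul_pow, abs_of_pos hτ1]
    rw [e1, e2] at h1'
    have hτL : τ * L < 1 := (lt_div_iff₀ hL).mp hτ2
    have h23 : τ * (lam * pxs) ≤ τ * (⟪g xs, y - xs⟫ + L / 2 * ‖y - xs‖ ^ 2 + lam * py) :=
      mul_le_mul_of_nonneg_left (by linarith) hτ1.le
    have hA : ‖y - xs‖ ^ 2 ≤ 0 := by nlinarith [sq_nonneg ‖y - xs‖]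
    have : ‖y - xs‖ = 0 := by nlinarith [sq_nonneg ‖y - xs‖, norm_nonneg (y - xs)]
    have := norm_eq_zero.mp this
    exact sub_eq_zero.mp this
  ext y
  simp only [Set.mem_setOf_eq, Set.mem_singleton_iff]
  constructor
  · exact key y
  · intro hyx
    subst hyx
    obtain ⟨y0, hy0⟩ := hne
    have h0 := key y0 hy0
    subst h0
    exact hy0
end

section
/- Let f: ℝⁿ → ℝ be differentiable and ℓ-strongly convex (ℓ > 0), p proper, λ > 0, τ = 1/ℓ. If x* ∈ argmin_y { (1/2)‖y − (x* − τ∇f(x*))‖² + τλ p(y) }, then x* is a global minimizer of φ(x) = f(x) + λp(x), i.e., f(x) + λp(x) ≥ f(x*) + λp(x*) for all x. -/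
open RealInnerProductSpace

/-- f ℓ-strongly convex, τ = 1/ℓ, x* a proximal fixed point implies
x* is a global minimizer of f + λp. -/
theorem stmt8 (n : ℕ) (f : EuclideanSpace ℝ (Fin n) → ℝ)
    (g : EuclideanSpace ℝ (Fin n) → EuclideanSpace ℝ (Fin n))
    (hf : ∀ y, HasGradientAt f (g y) y)
    (ℓ : ℝ) (hℓ : 0 < ℓ)
    (hconv : ∀ x z, f z ≥ f x + ⟪g x, z - x⟫ + ℓ / 2 * ‖z - x‖ ^ 2)
    (p : EuclideanSpace ℝ (Fin n) → EReal)
    (hproper : ∃ x, p x ≠ ⊤) (hbot : ∀ x, p x ≠ ⊥)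
    (lam : ℝ) (hlam : 0 < lam)
    (τ : ℝ) (hτ : τ = 1 / ℓ)
    (xs : EuclideanSpace ℝ (Fin n)) (hps : p xs ≠ ⊤)
    (hmin : ∀ w,
      ((1 / 2 * ‖xs - (xs - τ • g xs)‖ ^ 2 : ℝ) : EReal) + ((τ * lam : ℝ) : EReal) * p xs ≤
      ((1 / 2 * ‖w - (xs - τ • g xs)‖ ^ 2 : ℝ) : EReal) + ((τ * lam : ℝ) : EReal) * p w) :
    ∀ x, (f xs : EReal) + (lam : EReal) * p xs ≤ (f x : EReal) + (lam : EReal) * p x := by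
  intro x
  obtain ⟨s, hs⟩ : ∃ s : ℝ, p xs = (s : EReal) :=
    ⟨(p xs).toReal, (EReal.coe_toReal hps (hbot xs)).symm⟩
  by_cases hpx : p x = ⊤
  · rw [hpx]
    have : (lam : EReal) * ⊤ = ⊤ := EReal.mul_top_of_pos (by exact_mod_cast hlam)
    rw [this]
    simp [EReal.add_top_of_ne_bot]
  · obtain ⟨r, hr⟩ : ∃ r : ℝ, p x = (r : EReal) :=
      ⟨(p x).toReal, (EReal.coe_toReal hpx (hbot x)).symm⟩
    have h := hmin x
    rw [hs, hr, ← EReal.coe_mul, ← EReal.coe_mul, ← EReal.coe_add, ← EReal.coe_add,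
      EReal.coe_le_coe_iff] at h
    rw [hs, hr, ← EReal.coe_mul, ← EReal.coe_mul, ← EReal.coe_add, ← EReal.coe_add,
      EReal.coe_le_coe_iff]
    have e1 : xs - (xs - τ • g xs) = τ • g xs := by abel
    have e2 : x - (xs - τ • g xs) = (x - xs) + τ • g xs := by abel
    rw [e1, e2, norm_add_sq_real, real_inner_smul_right, norm_smul] at h
    have hc := hconv xs x
    have hτ0 : 0 < τ := by rw [hτ]; positivity
    have hcomm : ⟪x - xs, g xs⟫ = ⟪g xs, x - xs⟫ := real_inner_comm _ _
    have hℓτ : ℓ * τ = 1 := by rw [hτ]; field_simp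
    nlinarith [mul_le_mul_of_nonneg_left h hℓ.le, sq_nonneg ‖x - xs‖, hℓ, hlam]
end

section
/- Let f: ℝⁿ → ℝ be differentiable and L-strongly smooth (f(z) ≤ f(x) + ⟨∇f(x), z-x⟩ + (L/2)‖z-x‖²), τ ∈ (0, 1/(4L)], Ω ⊆ ℝⁿ closed convex, λ > 0, and suppose x^{k+1} minimizes y ↦ f(x^k) + ⟨∇f(x^k), y - x^k⟩ + (1/(2τ))‖y - x^k‖² + λ‖y‖₀ over y ∈ Ω, with x^k ∈ Ω. Then φ(x^k) - φ(x^{k+1}) ≥ (3L/2)‖x^{k+1} - x^k‖², where φ(x) = f(x) + λ‖x‖₀. -/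
open RealInnerProductSpace

/-- if x^{k+1} minimizes the proximal model over Ω with
step τ ∈ (0, 1/(4L)], then φ(x^k) - φ(x^{k+1}) ≥ (3L/2)‖x^{k+1} - x^k‖²,
where φ(x) = f(x) + λ‖x‖₀. -/
theorem stmt14 (n : ℕ) (f : EuclideanSpace ℝ (Fin n) → ℝ)
    (g : EuclideanSpace ℝ (Fin n) → EuclideanSpace ℝ (Fin n))
    (hf : ∀ y, HasGradientAt f (g y) y)
    (L : ℝ) (hL : 0 < L)
    (hsmooth : ∀ x z, f z ≤ f x + ⟪g x, z - x⟫ + L / 2 * ‖z - x‖ ^ 2)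
    (τ : ℝ) (hτ1 : 0 < τ) (hτ2 : τ ≤ 1 / (4 * L))
    (Ω : Set (EuclideanSpace ℝ (Fin n))) (hcl : IsClosed Ω) (hconv : Convex ℝ Ω)
    (lam : ℝ) (hlam : 0 < lam)
    (xk xk1 : EuclideanSpace ℝ (Fin n)) (hxk : xk ∈ Ω) (hxk1 : xk1 ∈ Ω)
    (hmin : ∀ y ∈ Ω,
      f xk + ⟪g xk, xk1 - xk⟫ + 1 / (2 * τ) * ‖xk1 - xk‖ ^ 2 +
          lam * ({i | xk1 i ≠ 0}.ncard : ℝ) ≤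
      f xk + ⟪g xk, y - xk⟫ + 1 / (2 * τ) * ‖y - xk‖ ^ 2 +
          lam * ({i | y i ≠ 0}.ncard : ℝ)) :
    3 * L / 2 * ‖xk1 - xk‖ ^ 2 ≤
      (f xk + lam * ({i | xk i ≠ 0}.ncard : ℝ)) -
      (f xk1 + lam * ({i | xk1 i ≠ 0}.ncard : ℝ)) := by
  have hA := hmin xk hxk
  have hs := hsmooth xk xk1
  have hd : (0:ℝ) ≤ ‖xk1 - xk‖ ^ 2 := by positivity
  have h4 : 4 * L * τ ≤ 1 := by
    rw [le_div_iff₀ (by positivity)] at hτ2; linarith [mul_comm τ (4*L)]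
  have hc : 2 * L ≤ 1 / (2 * τ) := by
    rw [le_div_iff₀ (by positivity)]; nlinarith
  simp only [sub_self, inner_zero_right, norm_zero] at hA
  nlinarith [mul_le_mul_of_nonneg_right hc hd]
end

section
/- Let (x^k) be a sequence in ℝⁿ with ‖x^{k+1} - x^k‖ → 0, and suppose there exist η > 0 and K such that for all k ≥ K, every i in a designated index set I_k satisfies |x^{k+1}_i| ≥ η and x^{k+1}_j = 0 for j ∉ I_k. Then for all sufficiently large k, if I_k ≠ I_{k-1} then ‖x^{k+1} - x^k‖ ≥ η; consequently I_k is eventually constant. -/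
open Filter

lemma coord_le_norm {n : ℕ} (v : EuclideanSpace ℝ (Fin n)) (i : Fin n) :
    |v i| ≤ ‖v‖ := by
  rw [EuclideanSpace.norm_eq, ← Real.sqrt_sq_eq_abs]
  apply Real.sqrt_le_sqrt
  have : (v i) ^ 2 = ‖v i‖ ^ 2 := by simp [Real.norm_eq_abs, sq_abs]
  rw [this]
  exact Finset.single_le_sum (fun j _ => sq_nonneg ‖v j‖) (Finset.mem_univ i)

/-- if ‖x^{k+1} - x^k‖ → 0, and eventually every i ∈ I_k satisfies
|x^{k+1}_i| ≥ η while x^{k+1}_j = 0 for j ∉ I_k, then for all sufficiently large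
k a change of index set forces ‖x^{k+1} - x^k‖ ≥ η; consequently I_k is
eventually constant. -/
theorem stmt16 (n : ℕ) (x : ℕ → EuclideanSpace ℝ (Fin n))
    (I : ℕ → Set (Fin n)) (η : ℝ) (hη : 0 < η) (K : ℕ)
    (h1 : ∀ k ≥ K, ∀ i ∈ I k, η ≤ |x (k + 1) i|)
    (h2 : ∀ k ≥ K, ∀ i, i ∉ I k → x (k + 1) i = 0)
    (hconv : Tendsto (fun k => ‖x (k + 1) - x k‖) atTop (nhds 0)) :
    (∃ K', ∀ k ≥ K', I (k + 1) ≠ I k → η ≤ ‖x (k + 2) - x (k + 1)‖) ∧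
    (∃ K'', ∀ k ≥ K'', I k = I K'') := by
  have key : ∀ k ≥ K, I (k + 1) ≠ I k → η ≤ ‖x (k + 2) - x (k + 1)‖ := by
    intro k hk hne
    obtain ⟨i, hi⟩ : ∃ i, ¬(i ∈ I (k + 1) ↔ i ∈ I k) := by
      by_contra h
      push_neg at h
      exact hne (Set.ext fun i => (h i))
    rw [not_iff] at hi
    rcases Classical.em (i ∈ I (k + 1)) with h₁ | h₁
    · have h₂ : i ∉ I k := by tauto
      have e1 : η ≤ |x (k + 2) i| := h1 (k + 1) (le_trans hk (Nat.le_succ k)) i h₁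
      have e2 : x (k + 1) i = 0 := h2 k hk i h₂
      calc η ≤ |x (k + 2) i| := e1
        _ = |(x (k + 2) - x (k + 1)) i| := by
            simp [PiLp.sub_apply, e2]
        _ ≤ ‖x (k + 2) - x (k + 1)‖ := coord_le_norm _ i
    · have h₂ : i ∈ I k := by tauto
      have e1 : η ≤ |x (k + 1) i| := h1 k hk i h₂
      have e2 : x (k + 2) i = 0 := h2 (k + 1) (le_trans hk (Nat.le_succ k)) i h₁
      calc η ≤ |x (k + 1) i| := e1
        _ = |(x (k + 2) - x (k + 1)) i| := by
            simp [PiLp.sub_apply, e2, abs_sub_comm]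
        _ ≤ ‖x (k + 2) - x (k + 1)‖ := coord_le_norm _ i
  refine ⟨⟨K, key⟩, ?_⟩
  have hev : ∀ᶠ k in atTop, ‖x (k + 1) - x k‖ < η :=
    hconv.eventually (Filter.Tendsto.eventually_lt_const hη tendsto_id) |>.mono (by simp)
  obtain ⟨N, hN⟩ := (hconv.eventually_lt_const hη).exists_forall_of_atTop
  set M := max K N with hM
  refine ⟨M + 1, ?_⟩
  have hstep : ∀ k ≥ M + 1, I (k + 1) = I k := by
    intro k hk
    by_contra hne
    have hkK : k ≥ K := le_trans (le_trans (le_max_left K N) (Nat.le_succ M)) hk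
    have := key k hkK hne
    have hlt := hN (k + 1) (by omega)
    linarith
  intro k hk
  induction k with
  | zero => omega
  | succ m ih =>
    rcases Nat.lt_or_ge m (M + 1) with h | h
    · have : m + 1 = M + 1 := by omega
      rw [this]
    · rw [hstep m h, ih h]
end
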